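/- Existence of a Byzantine-resilient decoder: let F be a field, L, B positive naturals, N = L + 4B, and let f_1, …, f_L, α_1, …, α_N ∈ F be N + L pairwise distinct elements. Define φ : F^(L+2B) → F^N by φ(x)_n = Σ_{ℓ=1}^L x_ℓ·(f_ℓ − α_n)⁻¹ + Σ_{k=1}^{2B} x_{L+k}·α_n^{k−1}. Then there exists a function D : F^N → F^(L+2B) such that for every x ∈ F^(L+2B) and every Δ ∈ F^N with at most B nonzero coordinates, D(φ(x) + Δ) = x. -/

import Mathlib

/-!
The entries of `csaEnc f α y` are the values at the `α n` of the rational function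
`r(a) = ∑ ℓ, y_ℓ (f ℓ - a)⁻¹ + g(a)` with `deg g < 2B`. Clearing denominators turns `r` into a
polynomial of degree `< L + 2B`, which vanishes only if `y = 0` (evaluate at the poles `f ℓ`,
then cancel the nodal polynomial). So `r` has fewer than `L + 2B` zeros among the `α n`: two
distinct codewords differ in more than `2B` of the `L + 4B` coordinates, and nearest-codeword
decoding corrects `B` errors.
-/

/-- The CSA (cross-subspace alignment) encoding map `φ : F^(L+2B) → F^N`, `N = L + 4B`:
`φ(x)_n = Σ_{ℓ} x_ℓ (f_ℓ - α_n)⁻¹ + Σ_{k} x_{L+k} α_n^(k-1)`. -/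
def csaEnc {F : Type*} [Field F] {L B : ℕ} (f : Fin L → F) (α : Fin (L + 4*B) → F)
    (x : Fin L ⊕ Fin (2*B) → F) (n : Fin (L + 4*B)) : F :=
  ∑ ℓ : Fin L, x (Sum.inl ℓ) * (f ℓ - α n)⁻¹ +
  ∑ k : Fin (2*B), x (Sum.inr k) * α n ^ (k : ℕ)

open Polynomial Finset Lagrange

section PoleSum

variable {F ι : Type*} [Field F] [Fintype ι] [DecidableEq ι]

noncomputable def poleSumNumerator (f c : ι → F) (p : F[X]) : F[X] :=
  p * nodal univ f - ∑ i, C (c i) * nodal (univ.erase i) f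

theorem eval_poleSumNumerator {f : ι → F} (c : ι → F) (p : F[X]) {a : F} (ha : ∀ i, f i ≠ a) :
    (poleSumNumerator f c p).eval a =
      (nodal univ f).eval a * (∑ i, c i * (f i - a)⁻¹ + p.eval a) := by
  have hnodal : ∀ i, (nodal (univ.erase i) f).eval a = (nodal univ f).eval a * (a - f i)⁻¹ := by
    intro i
    rw [nodal_eq_mul_nodal_erase (mem_univ i), eval_mul]
    simp only [eval_sub, eval_X, eval_C]
    field_simp [sub_ne_zero.mpr (ha i).symm]
  simp only [poleSumNumerator, eval_sub, eval_mul, eval_finsetSum, eval_C, hnodal, mul_add,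
    Finset.mul_sum]
  rw [sub_eq_add_neg, add_comm, ← Finset.sum_neg_distrib]
  congr 1
  · refine Finset.sum_congr rfl fun i _ => ?_
    rw [← neg_sub a, inv_neg]
    ring
  · ring

theorem degree_poleSumNumerator_lt (f c : ι → F) {p : F[X]} {m : ℕ} (hp : p ∈ degreeLT F m) :
    (poleSumNumerator f c p).degree < Fintype.card ι + m := by
  refine (degree_sub_le _ _).trans_lt (max_lt ?_ ?_)
  · rw [degree_mul, degree_nodal, card_univ]
    by_cases hp0 : p = 0
    · simp [hp0]
    · rw [mem_degreeLT, degree_eq_natDegree hp0] at hp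
      rw [degree_eq_natDegree hp0]
      norm_cast at hp ⊢
      omega
  · refine (degree_sum_le _ _).trans_lt ((Finset.sup_lt_iff (WithBot.bot_lt_coe _)).mpr
      fun i _ => ?_)
    rw [C_mul']
    refine (degree_smul_le _ _).trans_lt ?_
    rw [degree_nodal, card_erase_of_mem (mem_univ i), card_univ]
    have : 0 < Fintype.card ι := Fintype.card_pos_iff.mpr ⟨i⟩
    norm_cast
    omega

theorem eval_poleSumNumerator_at_node {f : ι → F} (c : ι → F) (p : F[X]) (i : ι) :
    (poleSumNumerator f c p).eval (f i) = -(c i * (nodal (univ.erase i) f).eval (f i)) := by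
  rw [poleSumNumerator, eval_sub, eval_mul, eval_nodal_at_node (mem_univ i), mul_zero, zero_sub,
    eval_finsetSum, Finset.sum_eq_single i]
  · rw [eval_mul, eval_C]
  · intro j _ hji
    rw [eval_mul, eval_nodal_at_node (mem_erase.mpr ⟨hji.symm, mem_univ i⟩), mul_zero]
  · simp

theorem eq_zero_of_sum_mul_inv_sub_add_eval_eq_zero {f : ι → F} (hf : Function.Injective f) {c : ι → F}
    {p : F[X]} {m : ℕ} (hp : p ∈ degreeLT F m) (Z : Finset F) (hZ : ∀ a ∈ Z, ∀ i, f i ≠ a)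
    (hcard : Fintype.card ι + m ≤ #Z) (hzero : ∀ a ∈ Z, ∑ i, c i * (f i - a)⁻¹ + p.eval a = 0) :
    c = 0 ∧ p = 0 := by
  have hnum : poleSumNumerator f c p = 0 := by
    refine eq_zero_of_degree_lt_of_eval_finset_eq_zero Z
      ((degree_poleSumNumerator_lt f c hp).trans_le (by exact_mod_cast hcard)) fun a ha => ?_
    rw [eval_poleSumNumerator c p (hZ a ha), hzero a ha, mul_zero]
  have hc : c = 0 := by
    funext i
    have h := eval_poleSumNumerator_at_node (f := f) c p i
    rw [hnum, eval_zero, zero_eq_neg] at h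
    refine (mul_eq_zero.mp h).resolve_right (eval_nodal_not_at_node fun j hj => ?_)
    exact hf.ne (mem_erase.mp hj).1.symm
  refine ⟨hc, ?_⟩
  simpa [poleSumNumerator, hc, nodal_ne_zero] using hnum

end PoleSum

theorem exists_decoder_of_two_mul_lt_hammingDist {X ι : Type*} {β : ι → Type*} [Nonempty X]
    [Fintype ι] [∀ i, DecidableEq (β i)] (E : X → ∀ i, β i) (t : ℕ)
    (hE : ∀ x x', x ≠ x' → 2 * t < hammingDist (E x) (E x')) :
    ∃ D : (∀ i, β i) → X, ∀ x r, hammingDist r (E x) ≤ t → D r = x := by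
  refine ⟨fun r => Classical.epsilon fun x => hammingDist r (E x) ≤ t, fun x r hx => ?_⟩
  dsimp only
  set x₀ := Classical.epsilon fun x => hammingDist r (E x) ≤ t
  have hx₀ : hammingDist r (E x₀) ≤ t :=
    Classical.epsilon_spec (p := fun y => hammingDist r (E y) ≤ t) ⟨x, hx⟩
  by_contra hne
  have := hammingDist_triangle (E x₀) r (E x)
  rw [hammingDist_comm _ r] at this
  have := hE _ _ hne
  omega

section CSA

variable {F : Type*} [Field F] {L B : ℕ} {f : Fin L → F} {α : Fin (L + 4*B) → F}

theorem csaEnc_sub (x x' : Fin L ⊕ Fin (2*B) → F) :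
    csaEnc f α (x - x') = csaEnc f α x - csaEnc f α x' := by
  funext n
  simp only [csaEnc, Pi.sub_apply, sub_mul, Finset.sum_sub_distrib]
  ring

theorem csaEnc_apply_eq_sum_add_eval (x : Fin L ⊕ Fin (2*B) → F) (n : Fin (L + 4*B)) :
    csaEnc f α x n = ∑ ℓ, x (Sum.inl ℓ) * (f ℓ - α n)⁻¹ +
      ((degreeLTEquiv F (2*B)).symm (x ∘ Sum.inr) : F[X]).eval (α n) := by
  rw [eval_eq_sum_degreeLTEquiv (Submodule.coe_mem _), Subtype.coe_eta,
    LinearEquiv.apply_symm_apply, csaEnc]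
  rfl

theorem csaEnc_eq_zero_of_card_le (hdist : Function.Injective (Sum.elim f α))
    {y : Fin L ⊕ Fin (2*B) → F} (S : Finset (Fin (L + 4*B))) (hS : L + 2*B ≤ #S)
    (hy : ∀ n ∈ S, csaEnc f α y n = 0) : y = 0 := by
  classical
  set p := (degreeLTEquiv F (2*B)).symm (y ∘ Sum.inr)
  have hZ : ∀ a ∈ S.image α, ∀ ℓ, f ℓ ≠ a := by
    simp only [mem_image, forall_exists_index, and_imp]
    rintro _ n _ rfl ℓ
    exact hdist.ne Sum.inl_ne_inr
  have hcard : Fintype.card (Fin L) + 2*B ≤ #(S.image α) := by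
    have hα : Function.Injective α := hdist.comp Sum.inr_injective
    rwa [card_image_of_injective _ hα, Fintype.card_fin]
  have hzero : ∀ a ∈ S.image α, ∑ ℓ, y (Sum.inl ℓ) * (f ℓ - a)⁻¹ + (p : F[X]).eval a = 0 := by
    simp only [mem_image, forall_exists_index, and_imp]
    rintro _ n hn rfl
    rw [← hy n hn, csaEnc_apply_eq_sum_add_eval]
  obtain ⟨hinl, hinr⟩ := eq_zero_of_sum_mul_inv_sub_add_eval_eq_zero
    (hdist.comp Sum.inl_injective) (Submodule.coe_mem p) _ hZ hcard hzero
  have hinr' : y ∘ Sum.inr = 0 :=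
    (degreeLTEquiv F (2*B)).symm.map_eq_zero_iff.mp (Submodule.coe_eq_zero.mp hinr)
  funext z
  rcases z with ℓ | k
  · exact congrFun hinl ℓ
  · exact congrFun hinr' k

theorem two_mul_lt_hammingDist_csaEnc [DecidableEq F] (hdist : Function.Injective (Sum.elim f α))
    {x x' : Fin L ⊕ Fin (2*B) → F} (h : x ≠ x') :
    2 * B < hammingDist (csaEnc f α x) (csaEnc f α x') := by
  by_contra! hle
  refine h (sub_eq_zero.mp (csaEnc_eq_zero_of_card_le hdist
    (univ.filter fun n => csaEnc f α x n = csaEnc f α x' n) ?_ fun n hn => ?_))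
  · have := card_filter_add_card_filter_not (s := univ)
      (p := fun n => csaEnc f α x n = csaEnc f α x' n)
    rw [card_univ, Fintype.card_fin] at this
    simp only [hammingDist, ne_eq] at hle
    omega
  · rw [csaEnc_sub, Pi.sub_apply, (mem_filter.mp hn).2, sub_self]

end CSA

theorem csa_decoder_exists_general
    (F : Type*) [Field F] [DecidableEq F] (L B : ℕ)
    (f : Fin L → F) (α : Fin (L + 4*B) → F)
    (hdist : Function.Injective (Sum.elim f α)) :
    ∃ D : (Fin (L + 4*B) → F) → (Fin L ⊕ Fin (2*B) → F),
      ∀ (x : Fin L ⊕ Fin (2*B) → F) (Δ : Fin (L + 4*B) → F),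
        (Finset.univ.filter fun n => Δ n ≠ 0).card ≤ B →
        D (csaEnc f α x + Δ) = x := by
  obtain ⟨D, hD⟩ := exists_decoder_of_two_mul_lt_hammingDist (csaEnc f α) B
    fun _ _ => two_mul_lt_hammingDist_csaEnc hdist
  refine ⟨D, fun x Δ hΔ => hD x _ ?_⟩
  rwa [hammingDist_comm, hammingDist_eq_hammingNorm, neg_add_cancel_left]

/-- **Existence of a Byzantine-resilient decoder.**  With `N = L + 4B` and the `N + L`
evaluation points pairwise distinct, there is a decoder `D : F^N → F^(L+2B)` that recovers
`x` from `csaEnc f α x + Δ` for every error vector `Δ` with at most `B` nonzero coordinates. -/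
theorem csa_decoder_exists
    (F : Type*) [Field F] [DecidableEq F] (L B : ℕ) (hL : 0 < L) (hB : 0 < B)
    (f : Fin L → F) (α : Fin (L + 4*B) → F)
    (hdist : Function.Injective (Sum.elim f α)) :
    ∃ D : (Fin (L + 4*B) → F) → (Fin L ⊕ Fin (2*B) → F),
      ∀ (x : Fin L ⊕ Fin (2*B) → F) (Δ : Fin (L + 4*B) → F),
        (Finset.univ.filter fun n => Δ n ≠ 0).card ≤ B →
        D (csaEnc f α x + Δ) = x :=
  csa_decoder_exists_general F L B f α hdist
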